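/- Harmony for basic evaluation: every closed, proper, clash-free ESC term either has a non-erasing basic redex or is an answer (a value that is not a variable, possibly under a list of cuts). -/

import Mathlib

/-- Variables of the ESC: multiplicative or exponential, indexed by names. -/
inductive EVar where
  | mul : ℕ → EVar
  | exp : ℕ → EVar
deriving DecidableEq

/-- Test for being a multiplicative variable. -/
def EVar.isMulB : EVar → Bool
  | EVar.mul _ => true
  | EVar.exp _ => false

/-- ESC terms: variables, abstractions `λx.t`, promotions `!t`,
cuts `[v→x]t`, subtractions `[m▷v,x]t`, derelictions `[e?x]t`. -/
inductive Term where
  | var : EVar → Term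
  | lam : EVar → Term → Term
  | bang : Term → Term
  | cut : Term → EVar → Term → Term
  | sub : EVar → Term → EVar → Term → Term
  | der : EVar → EVar → Term → Term
deriving DecidableEq

namespace Term

/-- Values: variables, abstractions, promotions. -/
def IsValue : Term → Prop
  | var _ => True
  | lam _ _ => True
  | bang _ => True
  | _ => False

/-- Free variables. -/
def fv : Term → Finset EVar
  | var x => {x}
  | lam x t => fv t \ {x}
  | bang t => fv t
  | cut v x t => fv v ∪ (fv t \ {x})
  | sub m v x t => insert m (fv v ∪ (fv t \ {x}))
  | der e x t => insert e (fv t \ {x})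

/-- Multiplicative free variables. -/
def mfv (t : Term) : Finset EVar := (fv t).filter (fun x => x.isMulB = true)

/-- Proper terms (linearity of multiplicative variables, exponential boundary
of promotions, and the grammar constraints on values and variable kinds). -/
def Proper : Term → Prop
  | var _ => True
  | lam x t => Proper t ∧ (x.isMulB = true → x ∈ mfv t)
  | bang t => Proper t ∧ mfv t = ∅
  | cut v x t => IsValue v ∧ Proper v ∧ Proper t ∧
      mfv v ∩ (mfv t \ {x}) = ∅ ∧ (x.isMulB = true → x ∈ mfv t)
  | sub m v x t => m.isMulB = true ∧ IsValue v ∧ Proper v ∧ Proper t ∧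
      mfv v ∩ (mfv t \ {x}) = ∅ ∧ m ∉ mfv t ∧ (x.isMulB = true → x ∈ mfv t)
  | der e x t => e.isMulB = false ∧ Proper t ∧ (x.isMulB = true → x ∈ mfv t)

end Term

/-- Multiplicative values: multiplicative variables and abstractions. -/
def IsMulVal : Term → Prop
  | Term.var (EVar.mul _) => True
  | Term.lam _ _ => True
  | _ => False

/-- Exponential values: exponential variables and promotions. -/
def IsExpVal : Term → Prop
  | Term.var (EVar.exp _) => True
  | Term.bang _ => True
  | _ => False

/-- A clash occurs somewhere in the term: a cut of a multiplicative value on an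
exponential variable, or of an exponential value on a multiplicative variable. -/
def HasClash : Term → Prop
  | Term.var _ => False
  | Term.lam _ t => HasClash t
  | Term.bang t => HasClash t
  | Term.cut v x t => (IsMulVal v ∧ x.isMulB = false) ∨ (IsExpVal v ∧ x.isMulB = true) ∨
      HasClash v ∨ HasClash t
  | Term.sub _ v _ t => HasClash v ∨ HasClash t
  | Term.der _ _ t => HasClash t

/-- Left constructors: a left context is a list of these. -/
inductive LIt where
  | cut : Term → EVar → LIt
  | sub : EVar → Term → EVar → LIt
  | der : EVar → EVar → LIt

/-- Plugging a term under a list of left constructors. -/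
def plugL : List LIt → Term → Term
  | [], t => t
  | LIt.cut v x :: L, t => Term.cut v x (plugL L t)
  | LIt.sub m v x :: L, t => Term.sub m v x (plugL L t)
  | LIt.der e x :: L, t => Term.der e x (plugL L t)

/-- One-hole contexts for ESC terms. -/
inductive Ctx where
  | hole : Ctx
  | lam : EVar → Ctx → Ctx
  | bang : Ctx → Ctx
  | cutT : Ctx → EVar → Term → Ctx
  | cutC : Term → EVar → Ctx → Ctx
  | subV : EVar → Ctx → EVar → Term → Ctx
  | subC : EVar → Term → EVar → Ctx → Ctx
  | der : EVar → EVar → Ctx → Ctx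

/-- Plugging a term in a context. -/
def plug : Ctx → Term → Term
  | Ctx.hole, s => s
  | Ctx.lam x C, s => Term.lam x (plug C s)
  | Ctx.bang C, s => Term.bang (plug C s)
  | Ctx.cutT C x t, s => Term.cut (plug C s) x t
  | Ctx.cutC v x C, s => Term.cut v x (plug C s)
  | Ctx.subV m C x t, s => Term.sub m (plug C s) x t
  | Ctx.subC m v x C, s => Term.sub m v x (plug C s)
  | Ctx.der e x C, s => Term.der e x (plug C s)

/-- Variables captured by a context (bound on the path to the hole). -/
def binds : Ctx → Finset EVar
  | Ctx.hole => ∅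
  | Ctx.lam x C => insert x (binds C)
  | Ctx.bang C => binds C
  | Ctx.cutT C _ _ => binds C
  | Ctx.cutC _ x C => insert x (binds C)
  | Ctx.subV _ C _ _ => binds C
  | Ctx.subC _ _ x C => insert x (binds C)
  | Ctx.der _ x C => insert x (binds C)

/-- Non-erasing root rules of the ESC (the acting cut is at the root;
the inner context does not capture the cut variable). -/
inductive RootNW : Term → Term → Prop
  | axm1 {v : Term} {n : ℕ} {C : Ctx} :
      IsMulVal v → EVar.mul n ∉ binds C →
      RootNW (Term.cut v (EVar.mul n) (plug C (Term.var (EVar.mul n)))) (plug C v)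
  | axm2 {n₂ n : ℕ} {C : Ctx} {v : Term} {x : EVar} {t : Term} :
      EVar.mul n ∉ binds C →
      RootNW (Term.cut (Term.var (EVar.mul n₂)) (EVar.mul n)
               (plug C (Term.sub (EVar.mul n) v x t)))
             (plug C (Term.sub (EVar.mul n₂) v x t))
  | lolli {y : EVar} {L : List LIt} {v' : Term} {n : ℕ} {C : Ctx}
      {v : Term} {x : EVar} {t : Term} :
      Term.IsValue v' → EVar.mul n ∉ binds C →
      RootNW (Term.cut (Term.lam y (plugL L v')) (EVar.mul n)
               (plug C (Term.sub (EVar.mul n) v x t)))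
             (plug C (Term.cut v y (plugL L (Term.cut v' x t))))
  | axe1 {v : Term} {n : ℕ} {C : Ctx} :
      IsExpVal v → EVar.exp n ∉ binds C →
      RootNW (Term.cut v (EVar.exp n) (plug C (Term.var (EVar.exp n))))
             (Term.cut v (EVar.exp n) (plug C v))
  | axe2 {n₂ n : ℕ} {C : Ctx} {x : EVar} {t : Term} :
      EVar.exp n ∉ binds C →
      RootNW (Term.cut (Term.var (EVar.exp n₂)) (EVar.exp n)
               (plug C (Term.der (EVar.exp n) x t)))
             (Term.cut (Term.var (EVar.exp n₂)) (EVar.exp n)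
               (plug C (Term.der (EVar.exp n₂) x t)))
  | bang {L : List LIt} {v : Term} {n : ℕ} {C : Ctx} {x : EVar} {t : Term} :
      Term.IsValue v → EVar.exp n ∉ binds C →
      RootNW (Term.cut (Term.bang (plugL L v)) (EVar.exp n)
               (plug C (Term.der (EVar.exp n) x t)))
             (Term.cut (Term.bang (plugL L v)) (EVar.exp n)
               (plug C (plugL L (Term.cut v x t))))

/-- The erasing (weakening) root rule. -/
inductive RootW : Term → Term → Prop
  | w {v : Term} {e : EVar} {t : Term} :
      IsExpVal v → e ∉ Term.fv t → RootW (Term.cut v e t) t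

/-- Full micro-step ESC reduction: contextual closure of all root rules. -/
def EscStep (t s : Term) : Prop :=
  ∃ (C : Ctx) (t' s' : Term), (RootNW t' s' ∨ RootW t' s') ∧
    t = plug C t' ∧ s = plug C s'

/-- Clash-freeness: no reduct (including the term itself) has a clash. -/
def ClashFree (t : Term) : Prop :=
  ∀ s, Relation.ReflTransGen EscStep t s → ¬ HasClash s

/-- Closure of a relation under cut contexts `E ::= ⟨·⟩ | [v→x]E`. -/
inductive CutClos (R : Term → Term → Prop) : Term → Term → Prop
  | root {t s : Term} : R t s → CutClos R t s
  | cut {v : Term} {x : EVar} {t s : Term} :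
      CutClos R t s → CutClos R (Term.cut v x t) (Term.cut v x s)

/-- Plugging a term under a list of cuts (a cut context). -/
def plugE : List (Term × EVar) → Term → Term
  | [], t => t
  | (v, x) :: E, t => Term.cut v x (plugE E t)

/-- Answers: a non-variable value under a cut context. -/
def IsAnswer (t : Term) : Prop :=
  ∃ (E : List (Term × EVar)) (v : Term),
    Term.IsValue v ∧ (∀ x, v ≠ Term.var x) ∧ t = plugE E v

/-!
Peel off the maximal list of cuts, `t = E⟨u⟩`. If `u` is an abstraction or a promotion, `t` is
an answer. Otherwise `u` is a variable, a subtraction or a dereliction, and so waits on a free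
variable `y`; since `t` is closed, `y` is bound by some cut of `E`, and we take the innermost one,
`[v→y]`. Properness makes `v` a value, and clash-freeness makes its polarity that of `y`, so one
of the six non-erasing rules fires on `[v→y]E₂⟨u⟩`.
-/

def Ctx.ofCuts : List (Term × EVar) → Ctx
  | [] => Ctx.hole
  | (v, x) :: E => Ctx.cutC v x (Ctx.ofCuts E)

theorem plug_ofCuts (E : List (Term × EVar)) (u : Term) : plug (Ctx.ofCuts E) u = plugE E u := by
  induction E with
  | nil => rfl
  | cons p E ih => simp [Ctx.ofCuts, plug, plugE, ih]

theorem binds_ofCuts (E : List (Term × EVar)) :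
    binds (Ctx.ofCuts E) = (E.map Prod.snd).toFinset := by
  induction E with
  | nil => rfl
  | cons p E ih => simp [Ctx.ofCuts, binds, ih]

theorem plugE_append (E₁ E₂ : List (Term × EVar)) (u : Term) :
    plugE (E₁ ++ E₂) u = plugE E₁ (plugE E₂ u) := by
  induction E₁ with
  | nil => rfl
  | cons p E ih => simp [plugE, ih]

theorem CutClos.plugE {R : Term → Term → Prop} {a b : Term} (E : List (Term × EVar))
    (h : CutClos R a b) : CutClos R (plugE E a) (plugE E b) := by
  induction E with
  | nil => exact h
  | cons p E ih => exact .cut ih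

theorem HasClash.plugE {u : Term} (E : List (Term × EVar)) (h : HasClash u) :
    HasClash (plugE E u) := by
  induction E with
  | nil => exact h
  | cons p E ih => exact .inr (.inr (.inr ih))

theorem Term.Proper.of_plugE {E : List (Term × EVar)} {u : Term} (h : Proper (plugE E u)) :
    Proper u ∧ ∀ p ∈ E, IsValue p.1 := by
  induction E with
  | nil => exact ⟨h, by simp⟩
  | cons p E ih =>
    obtain ⟨hv, -, hrest, -⟩ := h
    obtain ⟨hu, hE⟩ := ih hrest
    exact ⟨hu, by simpa [hv] using hE⟩

theorem exists_innermost_cut {E : List (Term × EVar)} {u : Term} {y : EVar}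
    (hu : y ∈ Term.fv u) (hE : y ∉ Term.fv (plugE E u)) :
    ∃ E₁ v E₂, E = E₁ ++ (v, y) :: E₂ ∧ y ∉ E₂.map Prod.snd := by
  induction E using List.reverseRecOn generalizing u with
  | nil => exact absurd hu hE
  | append_singleton E p ih =>
    obtain ⟨w, x⟩ := p
    by_cases hxy : x = y
    · exact ⟨E, w, [], by rw [hxy], by simp⟩
    · have hu' : y ∈ Term.fv (Term.cut w x u) := by simp [Term.fv, hu, Ne.symm hxy]
      obtain ⟨E₁, v, E₂, rfl, hE₂⟩ := ih hu' (by simpa [plugE_append, plugE] using hE)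
      exact ⟨E₁, v, E₂ ++ [(w, x)], by simp, by simpa [Ne.symm hxy] using hE₂⟩

namespace Term

/-- `u` is stuck on the free variable `y`: the rules that consume `u` need a cut on `y`. -/
inductive WaitsOn : Term → EVar → Prop
  | var (y : EVar) : WaitsOn (var y) y
  | sub {n : ℕ} {v : Term} {x : EVar} {t : Term} :
      WaitsOn (sub (EVar.mul n) v x t) (EVar.mul n)
  | der {n : ℕ} {x : EVar} {t : Term} : WaitsOn (der (EVar.exp n) x t) (EVar.exp n)

theorem WaitsOn.mem_fv {u : Term} {y : EVar} (h : WaitsOn u y) : y ∈ fv u := by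
  cases h <;> simp [fv]

theorem Proper.nonVarValue_or_waitsOn {u : Term} (hu : Proper u)
    (hnc : ∀ v x s, u ≠ cut v x s) :
    (IsValue u ∧ ∀ x, u ≠ var x) ∨ ∃ y, WaitsOn u y := by
  cases u with
  | var y => exact .inr ⟨y, .var y⟩
  | lam | bang => exact .inl ⟨by simp [IsValue], fun _ => Term.noConfusion⟩
  | cut v x s => exact absurd rfl (hnc v x s)
  | sub m =>
    cases m with
    | mul => exact .inr ⟨_, .sub⟩
    | exp => simp [Proper, EVar.isMulB] at hu
  | der e =>
    cases e with
    | mul => simp [Proper, EVar.isMulB] at hu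
    | exp => exact .inr ⟨_, .der⟩

theorem exists_eq_plugL (t : Term) :
    ∃ (L : List LIt) (v : Term), IsValue v ∧ t = plugL L v := by
  induction t with
  | var x => exact ⟨[], var x, trivial, rfl⟩
  | lam x s => exact ⟨[], lam x s, trivial, rfl⟩
  | bang s => exact ⟨[], bang s, trivial, rfl⟩
  | cut v x _ _ ih =>
    obtain ⟨L, w, hw, rfl⟩ := ih
    exact ⟨LIt.cut v x :: L, w, hw, rfl⟩
  | sub m v x _ _ ih =>
    obtain ⟨L, w, hw, rfl⟩ := ih
    exact ⟨LIt.sub m v x :: L, w, hw, rfl⟩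
  | der e x _ ih =>
    obtain ⟨L, w, hw, rfl⟩ := ih
    exact ⟨LIt.der e x :: L, w, hw, rfl⟩

theorem exists_eq_plugE (t : Term) :
    ∃ (E : List (Term × EVar)) (u : Term), (∀ v x s, u ≠ cut v x s) ∧ t = plugE E u := by
  induction t with
  | cut v x _ _ ih =>
    obtain ⟨E, u, hu, rfl⟩ := ih
    exact ⟨(v, x) :: E, u, hu, rfl⟩
  | _ => exact ⟨[], _, fun _ _ _ => Term.noConfusion, rfl⟩

theorem exists_rootNW_of_waitsOn {u v : Term} {y : EVar} {C : Ctx} (hu : WaitsOn u y)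
    (hv : IsValue v) (hy : y ∉ binds C) (hc : ¬ HasClash (cut v y (plug C u))) :
    ∃ s, RootNW (cut v y (plug C u)) s := by
  -- each shape of `v` either matches a rule or is not a value or clashes with `y`
  cases hu with
  | var y =>
    cases y <;> rcases v with ((_ | _) | _ | _ | _ | _ | _) <;>
      first
      | exact ⟨_, .axm1 trivial hy⟩
      | exact ⟨_, .axe1 trivial hy⟩
      | simp [HasClash, IsMulVal, IsExpVal, EVar.isMulB, IsValue] at hc hv
  | sub =>
    rcases v with ((_ | _) | ⟨z, body⟩ | _ | _ | _ | _)
    case var.mul => exact ⟨_, .axm2 hy⟩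
    case lam =>
      obtain ⟨L, v', hv', rfl⟩ := exists_eq_plugL body
      exact ⟨_, .lolli hv' hy⟩
    all_goals simp [HasClash, IsMulVal, IsExpVal, EVar.isMulB, IsValue] at hc hv
  | der =>
    rcases v with ((_ | _) | _ | body | _ | _ | _)
    case var.exp => exact ⟨_, .axe2 hy⟩
    case bang =>
      obtain ⟨L, v', hv', rfl⟩ := exists_eq_plugL body
      exact ⟨_, .bang hv' hy⟩
    all_goals simp [HasClash, IsMulVal, IsExpVal, EVar.isMulB, IsValue] at hc hv

end Term

/-- Harmony for basic evaluation: every closed, proper, clash-free term either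
has a non-erasing basic redex or is an answer. -/
theorem basic_harmony (t : Term)
    (hclosed : Term.fv t = ∅) (hproper : Term.Proper t) (hcf : ClashFree t) :
    (∃ s, CutClos RootNW t s) ∨ IsAnswer t := by
  obtain ⟨E, u, hnc, rfl⟩ := Term.exists_eq_plugE t
  obtain ⟨hu, hvalues⟩ := hproper.of_plugE
  rcases hu.nonVarValue_or_waitsOn hnc with ⟨hv, hnv⟩ | ⟨y, hy⟩
  · exact .inr ⟨E, u, hv, hnv, rfl⟩
  obtain ⟨E₁, v, E₂, rfl, hE₂⟩ := exists_innermost_cut hy.mem_fv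
    (hclosed ▸ Finset.notMem_empty y)
  have hc : ¬ HasClash (Term.cut v y (plug (Ctx.ofCuts E₂) u)) := fun h =>
    hcf _ .refl (by simpa [plugE_append, plugE, plug_ofCuts] using h.plugE E₁)
  obtain ⟨s, hs⟩ := Term.exists_rootNW_of_waitsOn hy (hvalues (v, y) (by simp))
    (by simpa [binds_ofCuts] using hE₂) hc
  refine .inl ⟨plugE E₁ s, ?_⟩
  simpa [plugE_append, plugE, plug_ofCuts] using (CutClos.root hs).plugE E₁
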